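/- arXiv:2505.13954 — 2 statements merged into one kernel-verified Lean document; each statement's English description precedes it below -/
import Mathlib

section
/- Let f : ℝ^d → ℝ be L-smooth and μ > 0, and let f_μ(x) = E_v[f(x + μv)] with v uniformly distributed on the closed unit Euclidean ball in ℝ^d. Then for every x ∈ ℝ^d, ‖∇f_μ(x) − ∇f(x)‖₂² ≤ μ² L² d² / 4. -/
open MeasureTheory ProbabilityTheory Metric Finset

noncomputable section

/-- `ℝ^d` with the Euclidean norm. -/
abbrev Euc (d : ℕ) := EuclideanSpace ℝ (Fin d)

/-- `g` is `L`-smooth: differentiable with `L`-Lipschitz gradient. -/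
def LSmooth {d : ℕ} (L : ℝ) (g : Euc d → ℝ) : Prop :=
  Differentiable ℝ g ∧ ∀ x y : Euc d, ‖gradient g x - gradient g y‖ ≤ L * ‖x - y‖

/-- The uniform probability distribution on the unit Euclidean sphere of `ℝ^d`,
as a measure on the ambient space. -/
def sphereUniform (d : ℕ) : Measure (Euc d) :=
  (((volume : Measure (Euc d)).toSphere) Set.univ)⁻¹ •
    Measure.map Subtype.val ((volume : Measure (Euc d)).toSphere)

/-- The uniform probability distribution on the closed unit Euclidean ball of `ℝ^d`. -/
def ballUniform (d : ℕ) : Measure (Euc d) :=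
  ((volume (closedBall (0 : Euc d) 1))⁻¹) • volume.restrict (closedBall (0 : Euc d) 1)

/-- The smoothed function `f_μ(x) = E_v[f(x + μ v)]`, `v` uniform on the unit ball. -/
def smoothed {d : ℕ} (f : Euc d → ℝ) (μ : ℝ) (x : Euc d) : ℝ :=
  ∫ v, f (x + μ • v) ∂(ballUniform d)

lemma vol_cb_pos (d : ℕ) : 0 < volume (closedBall (0 : Euc d) 1) :=
  measure_closedBall_pos _ _ one_pos

lemma vol_cb_lt_top (d : ℕ) : volume (closedBall (0 : Euc d) 1) < ⊤ :=
  measure_closedBall_lt_top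

instance instBallUniformProb (d : ℕ) : IsProbabilityMeasure (ballUniform d) := by
  constructor
  rw [ballUniform, Measure.smul_apply, Measure.restrict_apply_univ, smul_eq_mul,
    ENNReal.inv_mul_cancel (vol_cb_pos d).ne' (vol_cb_lt_top d).ne]

lemma ballUniform_ae_le (d : ℕ) : ∀ᵐ v ∂(ballUniform d), ‖v‖ ≤ 1 := by
  rw [ballUniform]
  refine Measure.ae_smul_measure ?_ _
  filter_upwards [ae_restrict_mem measurableSet_closedBall] with v hv
  simpa using hv

/-- integrability over `ballUniform` of a continuous function -/
lemma integrable_ballUniform {d : ℕ} {E : Type*} [NormedAddCommGroup E] [NormedSpace ℝ E]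
    {g : Euc d → E} (hg : Continuous g) :
    Integrable g (ballUniform d) := by
  rw [ballUniform]
  refine Integrable.smul_measure ?_ (ENNReal.inv_ne_top.2 (vol_cb_pos d).ne')
  exact (hg.continuousOn).integrableOn_compact (isCompact_closedBall _ _)

lemma integral_norm_ballUniform {d : ℕ} (hd : 0 < d) :
    ∫ v, ‖v‖ ∂(ballUniform d) = d / (d + 1) := by
  haveI : Nonempty (Fin d) := ⟨⟨0, hd⟩⟩
  haveI : Nontrivial (Euc d) := inferInstance
  have hdim : Module.finrank ℝ (Euc d) = d := finrank_euclideanSpace_fin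
  set g : ℝ → ℝ := fun y => if y ≤ 1 then y else 0 with hg
  have key := integral_fun_norm_addHaar (volume : Measure (Euc d)) g
  rw [hdim] at key
  have h1 : ∫ x : Euc d, g ‖x‖ = ∫ x in closedBall (0 : Euc d) 1, ‖x‖ := by
    rw [← integral_indicator measurableSet_closedBall]
    congr 1 with x
    simp only [hg, Set.indicator, mem_closedBall_zero_iff]
  have h2 : ∫ y in Set.Ioi (0:ℝ), y ^ (d - 1) • g y = 1 / (d + 1) := by
    have : ∀ y ∈ Set.Ioi (0:ℝ), y ^ (d - 1) • g y
        = Set.indicator (Set.Ioc (0:ℝ) 1) (fun y => y ^ d) y := by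
      intro y hy
      simp only [hg, Set.indicator, Set.mem_Ioc, smul_eq_mul]
      by_cases h : y ≤ 1
      · rw [if_pos h, if_pos ⟨hy, h⟩, ← pow_succ, Nat.sub_add_cancel hd]
      · rw [if_neg h, if_neg (fun hc => h hc.2), mul_zero]
    rw [setIntegral_congr_fun measurableSet_Ioi this,
      setIntegral_indicator measurableSet_Ioc,
      Set.inter_eq_self_of_subset_right Set.Ioc_subset_Ioi_self,
      ← intervalIntegral.integral_of_le zero_le_one, integral_pow]
    simp
  rw [h1, h2] at key
  have hball : volume (ball (0 : Euc d) 1) = volume (closedBall (0 : Euc d) 1) :=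
    (Measure.addHaar_closedBall_eq_addHaar_ball _ _ _).symm
  rw [ballUniform, integral_smul_measure]
  rw [key, measureReal_def, hball, smul_eq_mul, smul_eq_mul, nsmul_eq_mul]
  rw [ENNReal.toReal_inv]
  have hpos : 0 < (volume (closedBall (0 : Euc d) 1)).toReal :=
    ENNReal.toReal_pos (vol_cb_pos d).ne' (vol_cb_lt_top d).ne
  field_simp

lemma fderiv_lip {d : ℕ} {L : ℝ} {f : Euc d → ℝ} (hf : LSmooth L f) (a b : Euc d) :
    ‖fderiv ℝ f a - fderiv ℝ f b‖ ≤ L * ‖a - b‖ := by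
  have h := hf.2 a b
  rwa [gradient, gradient, ← map_sub, LinearIsometryEquiv.norm_map] at h

lemma continuous_fderiv_of_lsmooth {d : ℕ} {L : ℝ} {f : Euc d → ℝ} (hL : 0 < L)
    (hf : LSmooth L f) : Continuous (fun y => fderiv ℝ f y) := by
  refine (LipschitzWith.of_dist_le_mul (K := L.toNNReal) ?_).continuous
  intro a b
  rw [dist_eq_norm, dist_eq_norm, Real.coe_toNNReal _ hL.le]
  exact fderiv_lip hf a b

lemma hasFDerivAt_smoothed {d : ℕ} {L μ : ℝ} (hL : 0 < L) (hμ : 0 < μ)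
    (f : Euc d → ℝ) (hf : LSmooth L f) (x : Euc d) :
    HasFDerivAt (smoothed f μ)
      (∫ v, fderiv ℝ f (x + μ • v) ∂(ballUniform d)) x := by
  have hcont : Continuous (fun y => fderiv ℝ f y) := continuous_fderiv_of_lsmooth hL hf
  have haff : ∀ v : Euc d, Continuous (fun x' : Euc d => x' + μ • v) :=
    fun v => continuous_id.add continuous_const
  refine hasFDerivAt_integral_of_dominated_of_fderiv_le
    (F := fun x' v => f (x' + μ • v)) (F' := fun x' v => fderiv ℝ f (x' + μ • v))
    (bound := fun _ => ‖fderiv ℝ f x‖ + L * (1 + μ)) (ball_mem_nhds x one_pos) ?_ ?_ ?_ ?_ ?_ ?_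
  · exact Filter.Eventually.of_forall fun x' =>
      (hf.1.continuous.comp (continuous_const.add (continuous_id.const_smul μ : Continuous fun v : Euc d => μ • v))
        :).aestronglyMeasurable
  · exact integrable_ballUniform
      (hf.1.continuous.comp (continuous_const.add (continuous_id.const_smul μ : Continuous fun v : Euc d => μ • v)) :)
  · exact (hcont.comp (continuous_const.add (continuous_id.const_smul μ : Continuous fun v : Euc d => μ • v))
      :).aestronglyMeasurable
  · filter_upwards [ballUniform_ae_le d] with v hv
    intro x' hx'
    have h1 : ‖fderiv ℝ f (x' + μ • v) - fderiv ℝ f x‖ ≤ L * (1 + μ) := by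
      refine (fderiv_lip hf _ _).trans ?_
      have : x' + μ • v - x = (x' - x) + μ • v := by abel
      rw [this]
      refine mul_le_mul_of_nonneg_left ?_ hL.le
      calc ‖(x' - x) + μ • v‖ ≤ ‖x' - x‖ + ‖μ • v‖ := norm_add_le _ _
        _ ≤ 1 + μ := by
            refine add_le_add ?_ ?_
            · exact le_of_lt (by simpa [dist_eq_norm] using hx')
            · rw [norm_smul, Real.norm_eq_abs, abs_of_pos hμ]
              calc μ * ‖v‖ ≤ μ * 1 := mul_le_mul_of_nonneg_left hv hμ.le
                _ = μ := mul_one μ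
    calc ‖fderiv ℝ f (x' + μ • v)‖
        ≤ ‖fderiv ℝ f x‖ + ‖fderiv ℝ f (x' + μ • v) - fderiv ℝ f x‖ :=
          norm_le_norm_add_norm_sub' _ _
      _ ≤ ‖fderiv ℝ f x‖ + L * (1 + μ) := add_le_add_right h1 _
  · exact integrable_const _
  · refine Filter.Eventually.of_forall fun v => fun x' _ => ?_
    have h1 : HasFDerivAt (fun x'' : Euc d => x'' + μ • v)
        (ContinuousLinearMap.id ℝ (Euc d)) x' := (hasFDerivAt_id x').add_const _
    have h2 := ((hf.1 (x' + μ • v)).hasFDerivAt).comp x' h1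
    simpa [Function.comp_def] using h2

/-- `‖∇f_μ(x) − ∇f(x)‖² ≤ μ²L²d²/4`. -/
theorem smoothed_grad_dist_le {d : ℕ} {L μ : ℝ} (hL : 0 < L) (hμ : 0 < μ)
    (f : Euc d → ℝ) (hf : LSmooth L f) (x : Euc d) :
    ‖gradient (smoothed f μ) x - gradient f x‖ ^ 2 ≤ μ ^ 2 * L ^ 2 * d ^ 2 / 4 := by
  rcases Nat.eq_zero_or_pos d with hd | hd
  · subst hd
    have : gradient (smoothed f μ) x - gradient f x = 0 := Subsingleton.elim _ _
    simp [this]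
  · -- main case
    have hderiv := hasFDerivAt_smoothed hL hμ f hf x
    have hcont : Continuous (fun y => fderiv ℝ f y) := continuous_fderiv_of_lsmooth hL hf
    have haff : Continuous (fun v : Euc d => x + μ • v) := continuous_const.add
      (continuous_id.const_smul μ)
    have hint1 : Integrable (fun v => fderiv ℝ f (x + μ • v)) (ballUniform d) :=
      integrable_ballUniform (hcont.comp haff)
    have hkey : gradient (smoothed f μ) x - gradient f x
        = (InnerProductSpace.toDual ℝ (Euc d)).symm
            (∫ v, (fderiv ℝ f (x + μ • v) - fderiv ℝ f x) ∂(ballUniform d)) := by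
      rw [gradient, gradient, hderiv.fderiv, ← map_sub]
      congr 1
      rw [integral_sub hint1 (integrable_const _), integral_const]
      simp
    have hnorm : ‖gradient (smoothed f μ) x - gradient f x‖
        ≤ μ * L * (d / (d + 1)) := by
      rw [hkey, LinearIsometryEquiv.norm_map]
      calc ‖∫ v, (fderiv ℝ f (x + μ • v) - fderiv ℝ f x) ∂(ballUniform d)‖
          ≤ ∫ v, ‖fderiv ℝ f (x + μ • v) - fderiv ℝ f x‖ ∂(ballUniform d) :=
            norm_integral_le_integral_norm _
        _ ≤ ∫ v, μ * L * ‖v‖ ∂(ballUniform d) := by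
            refine integral_mono ((hint1.sub (integrable_const _)).norm) ?_ ?_
            · exact (integrable_ballUniform continuous_norm).const_mul _
            · intro v
              calc ‖fderiv ℝ f (x + μ • v) - fderiv ℝ f x‖
                  ≤ L * ‖x + μ • v - x‖ := fderiv_lip hf _ _
                _ = μ * L * ‖v‖ := by
                    rw [add_sub_cancel_left, norm_smul, Real.norm_eq_abs, abs_of_pos hμ]
                    ring
        _ = μ * L * (d / (d + 1)) := by
            rw [integral_const_mul, integral_norm_ballUniform hd]
    have hle : ‖gradient (smoothed f μ) x - gradient f x‖ ≤ μ * L * (d / 2) := by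
      refine hnorm.trans ?_
      refine mul_le_mul_of_nonneg_left ?_ (by positivity)
      refine div_le_div_of_nonneg_left (Nat.cast_nonneg d) two_pos ?_
      have : (1 : ℝ) ≤ d := by exact_mod_cast hd
      linarith
    calc ‖gradient (smoothed f μ) x - gradient f x‖ ^ 2
        ≤ (μ * L * (d / 2)) ^ 2 := by
          refine pow_le_pow_left₀ (norm_nonneg _) hle 2
      _ = μ ^ 2 * L ^ 2 * d ^ 2 / 4 := by ring
end
end

section
/- Let f_i : ℝ^d → ℝ be L-smooth, let μ > 0, and let x, x̂ ∈ ℝ^d. Let ĝ_i(x̂) = (d/μ)(f_i(x̂ + μu) − f_i(x̂)) u be the two-point zeroth-order gradient estimate at x̂ with u uniformly distributed on the unit Euclidean sphere S^{d−1}. Then E_u[‖∇f_i(x) − ĝ_i(x̂)‖₂²] ≤ 6d‖∇f_i(x̂)‖₂² + 3L²‖x − x̂‖₂² + (9/4) L² d² μ². -/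
open MeasureTheory ProbabilityTheory Metric Finset
open scoped RealInnerProductSpace Pointwise ENNReal

noncomputable section

lemma grad_cont {d : ℕ} {L : ℝ} (hL : 0 ≤ L) {f : Euc d → ℝ} (hf : LSmooth L f) :
    Continuous (fun y => gradient f y) := by
  have : LipschitzWith (Real.toNNReal L) (fun y => gradient f y) := by
    apply LipschitzWith.of_dist_le_mul
    intro a b
    rw [dist_eq_norm, dist_eq_norm, Real.coe_toNNReal L hL]
    exact hf.2 a b
  exact this.continuous

lemma taylor_bound {d : ℕ} {L : ℝ} (hL : 0 ≤ L) {f : Euc d → ℝ} (hf : LSmooth L f)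
    (x v : Euc d) :
    abs (f (x + v) - f x - ⟪gradient f x, v⟫) ≤ L / 2 * ‖v‖ ^ 2 := by
  have hderiv : ∀ t : ℝ, HasDerivAt (fun t : ℝ => f (x + t • v))
      (⟪gradient f (x + t • v), v⟫) t := by
    intro t
    have h1 : HasFDerivAt f (InnerProductSpace.toDual ℝ _ (gradient f (x + t • v)))
        (x + t • v) := (hf.1 _).hasGradientAt.hasFDerivAt
    have h2 : HasDerivAt (fun t : ℝ => x + t • v) v t := by
      simpa using ((hasDerivAt_id t).smul_const v).const_add x
    simpa [InnerProductSpace.toDual_apply_apply, Function.comp_def] using h1.comp_hasDerivAt t h2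
  have hcont : Continuous fun t : ℝ => ⟪gradient f (x + t • v), v⟫ := by
    exact Continuous.inner ((grad_cont hL hf).comp (by continuity)) continuous_const
  have hFTC : ∫ t in (0:ℝ)..1, ⟪gradient f (x + t • v), v⟫
      = f (x + v) - f x := by
    have := intervalIntegral.integral_eq_sub_of_hasDerivAt (f := fun t : ℝ => f (x + t • v))
      (fun t _ => hderiv t) (hcont.intervalIntegrable 0 1)
    simpa using this
  have key : f (x + v) - f x - ⟪gradient f x, v⟫
      = ∫ t in (0:ℝ)..1, (⟪gradient f (x + t • v), v⟫ - ⟪gradient f x, v⟫) := by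
    rw [intervalIntegral.integral_sub (hcont.intervalIntegrable 0 1)
      intervalIntegrable_const, hFTC, intervalIntegral.integral_const]
    simp
  rw [key]
  have hb : ∀ t ∈ Set.uIoc (0:ℝ) 1,
      ‖⟪gradient f (x + t • v), v⟫ - ⟪gradient f x, v⟫‖ ≤ L * ‖v‖ ^ 2 * t := by
    intro t ht
    rw [Set.uIoc_of_le (by norm_num : (0:ℝ) ≤ 1)] at ht
    have ht0 : 0 < t := ht.1
    rw [← inner_sub_left]
    calc ‖⟪gradient f (x + t • v) - gradient f x, v⟫‖
        ≤ ‖gradient f (x + t • v) - gradient f x‖ * ‖v‖ := by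
          exact norm_inner_le_norm _ _
      _ ≤ (L * ‖(x + t • v) - x‖) * ‖v‖ := by
          gcongr; exact hf.2 _ _
      _ = L * ‖v‖ ^ 2 * t := by
          rw [add_sub_cancel_left, norm_smul, Real.norm_eq_abs, abs_of_pos ht0]; ring
  have habs : ‖∫ t in (0:ℝ)..1, (⟪gradient f (x + t • v), v⟫ - ⟪gradient f x, v⟫)‖
      ≤ |∫ t in (0:ℝ)..1, L * ‖v‖ ^ 2 * t| := by
    apply intervalIntegral.norm_integral_le_abs_of_norm_le
    · filter_upwards [ae_restrict_mem measurableSet_uIoc] with t ht using hb t ht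
    · apply Continuous.intervalIntegrable; continuity
  rw [Real.norm_eq_abs] at habs
  refine habs.trans ?_
  rw [intervalIntegral.integral_const_mul, integral_id]
  rw [abs_of_nonneg (by positivity)]
  norm_num
  exact le_of_eq (by ring)

def sphereHomeo {d : ℕ} (e : Euc d ≃ₗᵢ[ℝ] Euc d) :
    sphere (0 : Euc d) 1 ≃ₜ sphere (0 : Euc d) 1 where
  toFun w := ⟨e w, by
    rw [mem_sphere_zero_iff_norm, e.norm_map]
    exact mem_sphere_zero_iff_norm.mp w.2⟩
  invFun w := ⟨e.symm w, by
    rw [mem_sphere_zero_iff_norm, e.symm.norm_map]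
    exact mem_sphere_zero_iff_norm.mp w.2⟩
  left_inv w := by
    apply Subtype.ext
    exact e.symm_apply_apply w
  right_inv w := by
    apply Subtype.ext
    exact e.apply_symm_apply w
  continuous_toFun := by
    apply Continuous.subtype_mk
    exact e.continuous.comp continuous_subtype_val
  continuous_invFun := by
    apply Continuous.subtype_mk
    exact e.symm.continuous.comp continuous_subtype_val

lemma map_sphereHomeo {d : ℕ} (e : Euc d ≃ₗᵢ[ℝ] Euc d) :
    Measure.map (sphereHomeo e) ((volume : Measure (Euc d)).toSphere)
      = (volume : Measure (Euc d)).toSphere := by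
  ext s hs
  rw [Measure.map_apply (sphereHomeo e).continuous.measurable hs]
  have hs' : MeasurableSet ((sphereHomeo e) ⁻¹' s) :=
    (sphereHomeo e).continuous.measurable hs
  rw [Measure.toSphere_apply' _ hs', Measure.toSphere_apply' _ hs]
  congr 1
  have himg : (Subtype.val '' ((sphereHomeo e) ⁻¹' s))
      = e.symm '' (Subtype.val '' s) := by
    ext z
    constructor
    · rintro ⟨w, hw, rfl⟩
      exact ⟨(sphereHomeo e w : Euc d), ⟨_, hw, rfl⟩, e.symm_apply_apply _⟩
    · rintro ⟨a, ⟨w, hw, rfl⟩, rfl⟩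
      refine ⟨(sphereHomeo e).symm w, ?_, rfl⟩
      show (sphereHomeo e) ((sphereHomeo e).symm w) ∈ s
      rw [Homeomorph.apply_symm_apply]
      exact hw
  rw [himg]
  have hsmul : Set.Ioo (0:ℝ) 1 • (e.symm '' (Subtype.val '' s))
      = e.symm '' (Set.Ioo (0:ℝ) 1 • (Subtype.val '' s)) := by
    ext z
    simp only [Set.mem_smul, Set.mem_image]
    constructor
    · rintro ⟨t, ht, b, ⟨a, ha, rfl⟩, rfl⟩
      exact ⟨t • a, ⟨t, ht, a, ha, rfl⟩, by simp⟩
    · rintro ⟨b, ⟨t, ht, a, ha, rfl⟩, rfl⟩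
      exact ⟨t, ht, e.symm a, ⟨a, ha, rfl⟩, by simp⟩
  rw [hsmul]
  set B := Set.Ioo (0:ℝ) 1 • (Subtype.val '' s)
  have h1 : (⇑e.symm) '' B = ⇑e ⁻¹' B := by
    ext z
    simp only [Set.mem_image, Set.mem_preimage]
    constructor
    · rintro ⟨x, hx, rfl⟩; simpa using hx
    · intro h; exact ⟨e z, h, e.symm_apply_apply z⟩
  rw [h1]
  have h2 := MeasurableEquiv.map_apply (e.toHomeomorph.toMeasurableEquiv)
    (μ := (volume : Measure (Euc d))) B
  have h3 : Measure.map (⇑e.toHomeomorph.toMeasurableEquiv) (volume : Measure (Euc d))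
      = volume := e.measurePreserving.map_eq
  rw [h3] at h2
  exact h2.symm

lemma integrable_sphere {d : ℕ} {h : sphere (0 : Euc d) 1 → ℝ} (hh : Continuous h) :
    Integrable h ((volume : Measure (Euc d)).toSphere) :=
  hh.integrable_of_hasCompactSupport (HasCompactSupport.of_compactSpace _)

lemma integral_comp_sphereHomeo {d : ℕ} (e : Euc d ≃ₗᵢ[ℝ] Euc d)
    (h : sphere (0 : Euc d) 1 → ℝ) :
    ∫ w, h (sphereHomeo e w) ∂((volume : Measure (Euc d)).toSphere)
      = ∫ w, h w ∂((volume : Measure (Euc d)).toSphere) :=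
  MeasurePreserving.integral_comp
    ⟨(sphereHomeo e).continuous.measurable, map_sphereHomeo e⟩
    (sphereHomeo e).measurableEmbedding h

lemma integral_inner_sq_unit {d : ℕ} (hd : 0 < d) (g : Euc d) (hg : ‖g‖ = 1) :
    ∫ w : sphere (0 : Euc d) 1, ⟪g, (w : Euc d)⟫ ^ 2 ∂((volume : Measure (Euc d)).toSphere)
      = ∫ w : sphere (0 : Euc d) 1, ((w : Euc d) (⟨0, hd⟩ : Fin d)) ^ 2
          ∂((volume : Measure (Euc d)).toSphere) := by
  set i₀ : Fin d := ⟨0, hd⟩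
  have card : Module.finrank ℝ (Euc d) = Fintype.card (Fin d) := by
    simp [finrank_euclideanSpace_fin]
  have horth : Orthonormal ℝ (Set.restrict {i₀} (fun _ : Fin d => g)) := by
    constructor
    · intro i; exact hg
    · intro i j hij
      exact absurd (Subtype.ext ((Set.mem_singleton_iff.mp i.2).trans
        (Set.mem_singleton_iff.mp j.2).symm)) hij
  obtain ⟨b, hb⟩ := horth.exists_orthonormalBasis_extension_of_card_eq card
  have hb0 : b i₀ = g := hb i₀ rfl
  have step1 : ∀ w : sphere (0 : Euc d) 1,
      ⟪g, (w : Euc d)⟫ ^ 2 = (((sphereHomeo b.repr w : sphere (0 : Euc d) 1) : Euc d) i₀) ^ 2 := by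
    intro w
    have : ((sphereHomeo b.repr w : sphere (0 : Euc d) 1) : Euc d) i₀ = b.repr (w : Euc d) i₀ := rfl
    rw [this, OrthonormalBasis.repr_apply_apply, hb0]
  calc ∫ w : sphere (0 : Euc d) 1, ⟪g, (w : Euc d)⟫ ^ 2 ∂((volume : Measure (Euc d)).toSphere)
      = ∫ w : sphere (0 : Euc d) 1,
          (((sphereHomeo b.repr w : sphere (0 : Euc d) 1) : Euc d) i₀) ^ 2
          ∂((volume : Measure (Euc d)).toSphere) := by
        congr 1; funext w; exact step1 w
    _ = ∫ w : sphere (0 : Euc d) 1, ((w : Euc d) i₀) ^ 2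
          ∂((volume : Measure (Euc d)).toSphere) :=
        integral_comp_sphereHomeo b.repr (fun w => ((w : Euc d) i₀) ^ 2)

lemma integral_inner_sq {d : ℕ} (hd : 0 < d) (g : Euc d) :
    ∫ w : sphere (0 : Euc d) 1, ⟪g, (w : Euc d)⟫ ^ 2 ∂((volume : Measure (Euc d)).toSphere)
      = ‖g‖ ^ 2 / d * (((volume : Measure (Euc d)).toSphere) Set.univ).toReal := by
  set T := (volume : Measure (Euc d)).toSphere with hT
  set κ := (T Set.univ).toReal with hκ
  set i₀ : Fin d := ⟨0, hd⟩
  -- the coordinate integrals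
  set K : Fin d → ℝ := fun i => ∫ w : sphere (0 : Euc d) 1, ((w : Euc d) i) ^ 2 ∂T with hK
  have hKint : ∀ i : Fin d, Integrable (fun w : sphere (0 : Euc d) 1 => ((w : Euc d) i) ^ 2) T := by
    intro i
    apply integrable_sphere
    have : Continuous fun w : sphere (0 : Euc d) 1 => ((w : Euc d) i) := by
      exact (continuous_apply i).comp
        ((EuclideanSpace.equiv (Fin d) ℝ).continuous.comp continuous_subtype_val)
    exact this.pow 2
  have hKeq : ∀ i : Fin d, K i = K i₀ := by
    intro i
    have h1 : ‖EuclideanSpace.single i (1:ℝ)‖ = 1 := by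
      rw [EuclideanSpace.norm_single]; norm_num
    have := integral_inner_sq_unit hd (EuclideanSpace.single i (1:ℝ)) h1
    simp only [hK]
    rw [← this]
    congr 1; funext w
    rw [EuclideanSpace.inner_single_left]
    norm_num
  have hpt1 : ∀ w : sphere (0 : Euc d) 1, ∑ i : Fin d, ((w : Euc d) i) ^ 2 = 1 := by
    intro w
    have h2 : ⟪(w : Euc d), (w : Euc d)⟫ = ∑ i : Fin d, ((w : Euc d) i) * ((w : Euc d) i) := by
      rw [PiLp.inner_apply]; rfl
    have h3 : ‖(w : Euc d)‖ = 1 := mem_sphere_zero_iff_norm.mp w.2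
    have h4 : ⟪(w : Euc d), (w : Euc d)⟫ = ‖(w : Euc d)‖ ^ 2 :=
      real_inner_self_eq_norm_sq (w : Euc d)
    calc ∑ i : Fin d, ((w : Euc d) i) ^ 2
        = ∑ i : Fin d, ((w : Euc d) i) * ((w : Euc d) i) := by
          apply Finset.sum_congr rfl; intro i _; ring
      _ = ‖(w : Euc d)‖ ^ 2 := by rw [← h2, h4]
      _ = 1 := by rw [h3]; norm_num
  have hsum : ∑ i : Fin d, K i = κ := by
    rw [hK, ← integral_finset_sum _ (fun i _ => hKint i)]
    rw [integral_congr_ae (Filter.Eventually.of_forall hpt1)]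
    rw [integral_const, smul_eq_mul, mul_one]
    rfl
  have hKi0 : (d : ℝ) * K i₀ = κ := by
    rw [← hsum, Finset.sum_congr rfl (fun i _ => hKeq i), Finset.sum_const, Finset.card_univ]
    simp [nsmul_eq_mul]
  have hdne : (d : ℝ) ≠ 0 := Nat.cast_ne_zero.mpr hd.ne'
  rcases eq_or_ne g 0 with rfl | hg
  · simp
  · have hunit : ‖(‖g‖⁻¹ • g)‖ = 1 := norm_smul_inv_norm hg
    have hgn : ‖g‖ ≠ 0 := norm_ne_zero_iff.mpr hg
    have hpt : ∀ w : sphere (0 : Euc d) 1,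
        ⟪g, (w : Euc d)⟫ ^ 2 = ‖g‖ ^ 2 * ⟪‖g‖⁻¹ • g, (w : Euc d)⟫ ^ 2 := by
      intro w
      rw [real_inner_smul_left]
      field_simp
    calc ∫ w : sphere (0 : Euc d) 1, ⟪g, (w : Euc d)⟫ ^ 2 ∂T
        = ∫ w : sphere (0 : Euc d) 1, ‖g‖ ^ 2 * ⟪‖g‖⁻¹ • g, (w : Euc d)⟫ ^ 2 ∂T :=
          integral_congr_ae (Filter.Eventually.of_forall hpt)
      _ = ‖g‖ ^ 2 * ∫ w : sphere (0 : Euc d) 1, ⟪‖g‖⁻¹ • g, (w : Euc d)⟫ ^ 2 ∂T :=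
          integral_const_mul _ _
      _ = ‖g‖ ^ 2 * K i₀ := by rw [integral_inner_sq_unit hd _ hunit]
      _ = ‖g‖ ^ 2 / d * κ := by
          rw [← hKi0]; field_simp


set_option maxHeartbeats 2000000 in
/-- bound on `E_u[‖∇f_i(x) − ĝ_i(x̂)‖²]` for the two-point
zeroth-order estimate at `x̂`. -/
theorem grad_minus_zo_estimate_le {d : ℕ} {L μ : ℝ} (hL : 0 < L) (hμ : 0 < μ)
    (f : Euc d → ℝ) (hf : LSmooth L f) (x xhat : Euc d) :
    ∫ u, ‖gradient f x
        - (((d : ℝ) / μ) * (f (xhat + μ • u) - f xhat)) • u‖ ^ 2 ∂(sphereUniform d)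
      ≤ 6 * d * ‖gradient f xhat‖ ^ 2 + 3 * L ^ 2 * ‖x - xhat‖ ^ 2
        + (9 / 4) * L ^ 2 * d ^ 2 * μ ^ 2 := by
  classical
  set g := gradient f xhat with hgdef
  set a := gradient f x with hadef
  rcases Nat.eq_zero_or_pos d with hd0 | hd
  · subst hd0
    haveI : IsEmpty (sphere (0 : Euc 0) 1) := by
      constructor
      rintro ⟨u, hu⟩
      rw [mem_sphere_zero_iff_norm] at hu
      rw [Subsingleton.elim u 0, norm_zero] at hu
      norm_num at hu
    have hT0 : ((volume : Measure (Euc 0)).toSphere) = 0 := Measure.eq_zero_of_isEmpty _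
    have h0 : sphereUniform 0 = 0 := by rw [sphereUniform, hT0]; simp
    rw [h0, integral_zero_measure]
    rw [Subsingleton.elim x xhat, sub_self, norm_zero]
    norm_num
  · haveI : Nontrivial (Euc d) := by
      apply Module.nontrivial_of_finrank_pos (R := ℝ)
      rw [finrank_euclideanSpace_fin]
      exact hd
    set T := (volume : Measure (Euc d)).toSphere with hTdef
    set κ := (T Set.univ).toReal with hκdef
    have hTuniv : T Set.univ = (d : ℝ≥0∞) * volume (ball (0 : Euc d) 1) := by
      rw [hTdef, Measure.toSphere_apply_univ]
      rw [finrank_euclideanSpace_fin]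
    have hκpos : 0 < κ := by
      rw [hκdef, hTuniv]
      apply ENNReal.toReal_pos
      · exact (ENNReal.mul_pos (by simp [hd.ne']) (measure_ball_pos _ _ one_pos).ne').ne'
      · exact (ENNReal.mul_lt_top (ENNReal.natCast_lt_top d) measure_ball_lt_top).ne
    have hμne : μ ≠ 0 := hμ.ne'
    have hdpos : (0:ℝ) < d := by exact_mod_cast hd
    -- transfer the integral to the sphere subtype
    have hLHS : ∫ u, ‖a - (((d : ℝ) / μ) * (f (xhat + μ • u) - f xhat)) • u‖ ^ 2
          ∂(sphereUniform d)
        = κ⁻¹ * ∫ w : sphere (0 : Euc d) 1,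
            ‖a - (((d : ℝ) / μ) * (f (xhat + μ • (w : Euc d)) - f xhat)) • (w : Euc d)‖ ^ 2 ∂T := by
      rw [sphereUniform, integral_smul_measure,
        MeasurableEmbedding.integral_map (MeasurableEmbedding.subtype_coe
          isClosed_sphere.measurableSet)]
      rw [ENNReal.toReal_inv, smul_eq_mul]
    rw [hLHS]
    have h_pt : ∀ w : sphere (0 : Euc d) 1,
        ‖a - (((d : ℝ) / μ) * (f (xhat + μ • (w : Euc d)) - f xhat)) • (w : Euc d)‖ ^ 2
          ≤ 3 * ‖a - g‖ ^ 2 + 3 * ‖g - ((d : ℝ) * ⟪g, (w : Euc d)⟫) • (w : Euc d)‖ ^ 2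
            + 3 * ((d : ℝ) * L * μ / 2) ^ 2 := by
      intro w
      set u : Euc d := (w : Euc d) with hudef
      have hu : ‖u‖ = 1 := mem_sphere_zero_iff_norm.mp w.2
      have hr := taylor_bound hL.le hf xhat (μ • u)
      set r : ℝ := f (xhat + μ • u) - f xhat - ⟪g, μ • u⟫ with hrdef
      have hrb : |r| ≤ L / 2 * μ ^ 2 := by
        refine hr.trans (le_of_eq ?_)
        rw [norm_smul, hu, mul_one, Real.norm_eq_abs, sq_abs]
      have hXdecomp : (((d : ℝ) / μ) * (f (xhat + μ • u) - f xhat)) • u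
          = (((d : ℝ) * ⟪g, u⟫) • u) + ((((d : ℝ) / μ) * r) • u) := by
        rw [← add_smul]
        congr 1
        have hsplit : f (xhat + μ • u) - f xhat = μ * ⟪g, u⟫ + r := by
          rw [hrdef, real_inner_smul_right]; ring
        rw [hsplit]
        field_simp
      have hC : ‖(((d : ℝ) / μ) * r) • u‖ ≤ (d : ℝ) * L * μ / 2 := by
        rw [norm_smul, hu, mul_one, Real.norm_eq_abs, abs_mul,
          abs_of_pos (div_pos hdpos hμ)]
        calc (d : ℝ) / μ * |r| ≤ (d : ℝ) / μ * (L / 2 * μ ^ 2) := by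
              gcongr
          _ = (d : ℝ) * L * μ / 2 := by field_simp
      have htri : ‖a - (((d : ℝ) / μ) * (f (xhat + μ • u) - f xhat)) • u‖
          ≤ ‖a - g‖ + ‖g - ((d : ℝ) * ⟪g, u⟫) • u‖ + (d : ℝ) * L * μ / 2 := by
        rw [hXdecomp]
        have habel : a - ((((d : ℝ) * ⟪g, u⟫) • u) + ((((d : ℝ) / μ) * r) • u))
            = (a - g) + ((g - ((d : ℝ) * ⟪g, u⟫) • u) + (-((((d : ℝ) / μ) * r) • u))) := by
          abel
        rw [habel]
        refine (norm_add_le _ _).trans ?_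
        rw [add_assoc]
        gcongr
        refine (norm_add_le _ _).trans ?_
        gcongr
        rw [norm_neg]
        exact hC
      have hsq : ‖a - (((d : ℝ) / μ) * (f (xhat + μ • u) - f xhat)) • u‖ ^ 2
          ≤ (‖a - g‖ + ‖g - ((d : ℝ) * ⟪g, u⟫) • u‖ + (d : ℝ) * L * μ / 2) ^ 2 :=
        pow_le_pow_left₀ (norm_nonneg _) htri 2
      nlinarith [sq_nonneg (‖a - g‖ - ‖g - ((d : ℝ) * ⟪g, u⟫) • u‖),
        sq_nonneg (‖a - g‖ - (d : ℝ) * L * μ / 2),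
        sq_nonneg (‖g - ((d : ℝ) * ⟪g, u⟫) • u‖ - (d : ℝ) * L * μ / 2)]
    -- integrability
    have hfc : Continuous f := hf.1.continuous
    have hval : Continuous fun w : sphere (0 : Euc d) 1 => (w : Euc d) :=
      continuous_subtype_val
    have hHcont : Continuous fun w : sphere (0 : Euc d) 1 =>
        ‖a - (((d : ℝ) / μ) * (f (xhat + μ • (w : Euc d)) - f xhat)) • (w : Euc d)‖ ^ 2 := by
      have h2 : Continuous fun w : sphere (0 : Euc d) 1 => xhat + μ • (w : Euc d) :=
        continuous_const.add (hval.const_smul μ)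
      have h3 : Continuous fun w : sphere (0 : Euc d) 1 =>
          ((d : ℝ) / μ) * (f (xhat + μ • (w : Euc d)) - f xhat) :=
        continuous_const.mul ((hfc.comp h2).sub continuous_const)
      exact ((continuous_const.sub (h3.smul hval)).norm.pow 2)
    have hi : Continuous fun w : sphere (0 : Euc d) 1 => ⟪g, (w : Euc d)⟫ :=
      Continuous.inner continuous_const hval
    have hBcont : Continuous fun w : sphere (0 : Euc d) 1 =>
        3 * ‖a - g‖ ^ 2 + 3 * ‖g - ((d : ℝ) * ⟪g, (w : Euc d)⟫) • (w : Euc d)‖ ^ 2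
          + 3 * ((d : ℝ) * L * μ / 2) ^ 2 := by
      have hB2 : Continuous fun w : sphere (0 : Euc d) 1 =>
          ‖g - ((d : ℝ) * ⟪g, (w : Euc d)⟫) • (w : Euc d)‖ ^ 2 :=
        ((continuous_const.sub ((continuous_const.mul hi).smul hval)).norm.pow 2)
      exact (continuous_const.add (continuous_const.mul hB2)).add continuous_const
    have hmono : ∫ w : sphere (0 : Euc d) 1,
          ‖a - (((d : ℝ) / μ) * (f (xhat + μ • (w : Euc d)) - f xhat)) • (w : Euc d)‖ ^ 2 ∂T
        ≤ ∫ w : sphere (0 : Euc d) 1,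
          (3 * ‖a - g‖ ^ 2 + 3 * ‖g - ((d : ℝ) * ⟪g, (w : Euc d)⟫) • (w : Euc d)‖ ^ 2
            + 3 * ((d : ℝ) * L * μ / 2) ^ 2) ∂T :=
      integral_mono (integrable_sphere hHcont) (integrable_sphere hBcont) h_pt
    -- compute the bound integral
    have hexp : ∀ w : sphere (0 : Euc d) 1,
        ‖g - ((d : ℝ) * ⟪g, (w : Euc d)⟫) • (w : Euc d)‖ ^ 2
          = ‖g‖ ^ 2 + ((d : ℝ) ^ 2 - 2 * d) * ⟪g, (w : Euc d)⟫ ^ 2 := by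
      intro w
      have hu : ‖(w : Euc d)‖ = 1 := mem_sphere_zero_iff_norm.mp w.2
      rw [norm_sub_sq_real, real_inner_smul_right, norm_smul, hu, mul_one,
        Real.norm_eq_abs, sq_abs]
      ring
    have hinnercont : Continuous fun w : sphere (0 : Euc d) 1 => ⟪g, (w : Euc d)⟫ ^ 2 :=
      hi.pow 2
    have hBval : ∫ w : sphere (0 : Euc d) 1,
          (3 * ‖a - g‖ ^ 2 + 3 * ‖g - ((d : ℝ) * ⟪g, (w : Euc d)⟫) • (w : Euc d)‖ ^ 2
            + 3 * ((d : ℝ) * L * μ / 2) ^ 2) ∂T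
        = (3 * ‖a - g‖ ^ 2 + 3 * (‖g‖ ^ 2 + ((d : ℝ) ^ 2 - 2 * d) * (‖g‖ ^ 2 / d))
            + 3 * ((d : ℝ) * L * μ / 2) ^ 2) * κ := by
      have hrw : ∀ w : sphere (0 : Euc d) 1,
          3 * ‖a - g‖ ^ 2 + 3 * ‖g - ((d : ℝ) * ⟪g, (w : Euc d)⟫) • (w : Euc d)‖ ^ 2
            + 3 * ((d : ℝ) * L * μ / 2) ^ 2
          = (3 * ‖a - g‖ ^ 2 + 3 * ‖g‖ ^ 2 + 3 * ((d : ℝ) * L * μ / 2) ^ 2)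
            + (3 * ((d : ℝ) ^ 2 - 2 * d)) * ⟪g, (w : Euc d)⟫ ^ 2 := by
        intro w; rw [hexp w]; ring
      rw [integral_congr_ae (Filter.Eventually.of_forall hrw),
        integral_add (integrable_const _)
          ((integrable_sphere hinnercont).const_mul _),
        integral_const, integral_const_mul, integral_inner_sq hd g, smul_eq_mul, measureReal_def]
      ring
    -- put everything together
    have hag : ‖a - g‖ ≤ L * ‖x - xhat‖ := hf.2 x xhat
    have hLHS2 : κ⁻¹ * ∫ w : sphere (0 : Euc d) 1,
          ‖a - (((d : ℝ) / μ) * (f (xhat + μ • (w : Euc d)) - f xhat)) • (w : Euc d)‖ ^ 2 ∂T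
        ≤ 3 * ‖a - g‖ ^ 2 + 3 * (‖g‖ ^ 2 + ((d : ℝ) ^ 2 - 2 * d) * (‖g‖ ^ 2 / d))
            + 3 * ((d : ℝ) * L * μ / 2) ^ 2 := by
      rw [inv_mul_le_iff₀ hκpos]
      calc _ ≤ _ := hmono
        _ = _ := hBval
        _ = _ := by ring
    refine hLHS2.trans ?_
    have hgd : ((d : ℝ) ^ 2 - 2 * d) * (‖g‖ ^ 2 / d) = ((d : ℝ) - 2) * ‖g‖ ^ 2 := by
      field_simp
    rw [hgd]
    have h1 : ‖a - g‖ ^ 2 ≤ L ^ 2 * ‖x - xhat‖ ^ 2 := by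
      have := pow_le_pow_left₀ (norm_nonneg _) hag 2
      calc ‖a - g‖ ^ 2 ≤ (L * ‖x - xhat‖) ^ 2 := this
        _ = L ^ 2 * ‖x - xhat‖ ^ 2 := by ring
    have hd1 : (1 : ℝ) ≤ d := by exact_mod_cast hd
    have hgnn : (0:ℝ) ≤ ‖g‖ ^ 2 := sq_nonneg _
    nlinarith [sq_nonneg ((d : ℝ) * L * μ), mul_pos (mul_pos hdpos hL) hμ]
end
end
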